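/- Every binary orchard phylogenetic network is tree-based. -/

import Mathlib

/-- A (directed) phylogenetic-network-like graph on a finite set of
natural-number labelled vertices. -/
structure PNet where
  verts : Finset ℕ
  adj : ℕ → ℕ → Prop
  adjDec : DecidableRel adj
  adj_mem : ∀ u v, adj u v → u ∈ verts ∧ v ∈ verts

attribute [instance] PNet.adjDec

namespace PNet

/-- In-degree of a vertex. -/
def indeg (N : PNet) (v : ℕ) : ℕ := (N.verts.filter fun u => N.adj u v).card

/-- Out-degree of a vertex. -/
def outdeg (N : PNet) (v : ℕ) : ℕ := (N.verts.filter fun w => N.adj v w).card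

/-- A leaf is a vertex of out-degree 0. -/
def IsLeaf (N : PNet) (v : ℕ) : Prop := v ∈ N.verts ∧ N.outdeg v = 0

/-- A reticulation node is a vertex of in-degree 2. -/
def IsRetic (N : PNet) (v : ℕ) : Prop := v ∈ N.verts ∧ N.indeg v = 2

/-- A root is a vertex of in-degree 0. -/
def IsRoot (N : PNet) (v : ℕ) : Prop := v ∈ N.verts ∧ N.indeg v = 0

/-- The digraph is acyclic. -/
def Acyclic (N : PNet) : Prop := ∀ v, ¬ Relation.TransGen N.adj v v

/-- A binary (rooted) phylogenetic network: acyclic, a root of in-degree 0 and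
out-degree 2 from which all vertices are reachable, and every other vertex is a
tree node (in 1, out 2), a reticulation node (in 2, out 1) or a leaf (in 1, out 0). -/
def IsBinary (N : PNet) : Prop :=
  N.Acyclic ∧ ∃ ρ, N.IsRoot ρ ∧ N.outdeg ρ = 2 ∧
    (∀ v ∈ N.verts, Relation.ReflTransGen N.adj ρ v) ∧
    (∀ v ∈ N.verts, v ≠ ρ →
      (N.indeg v = 1 ∧ N.outdeg v = 2) ∨ (N.indeg v = 2 ∧ N.outdeg v = 1) ∨
      (N.indeg v = 1 ∧ N.outdeg v = 0))

/-- Tree-child: every internal node has a child that is not a reticulation. -/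
def TreeChild (N : PNet) : Prop :=
  ∀ v ∈ N.verts, N.outdeg v ≠ 0 → ∃ c, N.adj v c ∧ N.indeg c ≠ 2

/-- Stack-free: no edge joins two reticulation nodes. -/
def StackFree (N : PNet) : Prop :=
  ∀ u v, N.adj u v → ¬ (N.indeg u = 2 ∧ N.indeg v = 2)

end PNet

namespace PNet

/-- Cherry reduction: for a cherry `(x,y)` (two leaves with common parent `p`),
delete `y` and suppress the resulting degree-two node `p` (when `p` is not the
root). -/
def CherryPick (N N' : PNet) : Prop :=
  ∃ x y p, x ≠ y ∧ N.IsLeaf x ∧ N.IsLeaf y ∧ N.adj p x ∧ N.adj p y ∧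
    ((N.indeg p = 0 ∧ N'.verts = N.verts \ {y} ∧
        ∀ u v, N'.adj u v ↔ (N.adj u v ∧ v ≠ y)) ∨
     (∃ q, N.adj q p ∧ N'.verts = N.verts \ {y, p} ∧
        ∀ u v, N'.adj u v ↔
          ((N.adj u v ∧ u ≠ p ∧ v ≠ p ∧ v ≠ y) ∨ (u = q ∧ v = x))))

/-- Reticulated cherry reduction: leaves `x` and `y`, the parent `w` of `x` is
a reticulation, and a tree node `p` is a common parent of `y` and `w`.  Delete
the hybrid edge `(p,w)` and suppress the resulting degree-two nodes. -/
def RetCherryPick (N N' : PNet) : Prop :=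
  ∃ x y w p, x ≠ y ∧ N.IsLeaf x ∧ N.IsLeaf y ∧
    N.adj w x ∧ N.indeg w = 2 ∧ N.adj p w ∧ N.adj p y ∧ N.indeg p ≤ 1 ∧
    ∃ q', q' ≠ p ∧ N.adj q' w ∧
    ((N.indeg p = 0 ∧ N'.verts = N.verts \ {w} ∧
        ∀ u v, N'.adj u v ↔
          ((N.adj u v ∧ u ≠ w ∧ v ≠ w) ∨ (u = q' ∧ v = x))) ∨
     (∃ q, N.adj q p ∧ N'.verts = N.verts \ {w, p} ∧
        ∀ u v, N'.adj u v ↔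
          ((N.adj u v ∧ u ≠ w ∧ v ≠ w ∧ u ≠ p ∧ v ≠ p) ∨
            (u = q' ∧ v = x) ∨ (u = q ∧ v = y))))

/-- One cherry or reticulated-cherry reduction step. -/
def Reduce (N N' : PNet) : Prop := N.CherryPick N' ∨ N.RetCherryPick N'

/-- The trivial network: a root with a single leaf child. -/
def IsTrivialNet (T : PNet) : Prop :=
  ∃ r l, r ≠ l ∧ T.verts = {r, l} ∧ ∀ u v, (T.adj u v ↔ (u = r ∧ v = l))

/-- Orchard: reducible to the trivial network by cherry and
reticulated-cherry reductions. -/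
def Orchard (N : PNet) : Prop :=
  ∃ T, IsTrivialNet T ∧ Relation.ReflTransGen Reduce N T

end PNet

namespace PNet

/-- Tree-based: `N` has a rooted spanning tree (a subgraph in which every
non-root vertex has a unique parent) all of whose leaves are leaves of `N`. -/
def TreeBased (N : PNet) : Prop :=
  ∃ S : ℕ → ℕ → Prop,
    (∀ u v, S u v → N.adj u v) ∧
    (∀ v ∈ N.verts, 0 < N.indeg v → ∃! u, S u v) ∧
    (∀ v ∈ N.verts, N.indeg v = 0 → ∀ u, ¬ S u v) ∧
    (∀ v ∈ N.verts, (∀ w, ¬ S v w) → N.outdeg v = 0)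

end PNet

/-!
Undo the reductions one at a time. Each is a composite of three elementary operations:
deleting a leaf, deleting an edge, and suppressing a vertex with one parent and one child.
Along each of them a base tree of the smaller network extends to one of the larger network,
provided the larger network is `IsSubbinary`: in- and out-degrees at most two, and a single child
below every reticulation. Binarity itself is not preserved (a cherry reduction at the root leaves
a root of out-degree one), but this weakening is, so it holds all along the reduction sequence.
-/

theorem Finset.eq_or_eq_of_card_le_two {α : Type*} {s : Finset α} {a b c : α}
    (hs : s.card ≤ 2) (ha : a ∈ s) (hb : b ∈ s) (hab : a ≠ b) (hc : c ∈ s) : c = a ∨ c = b := by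
  by_contra! h
  have : 2 < s.card := Finset.two_lt_card.2 ⟨a, ha, b, hb, c, hc, hab, h.1.symm, h.2.symm⟩
  omega

theorem Finset.card_le_of_subset_insert_erase {α : Type*} [DecidableEq α] {s t : Finset α}
    {a b : α} (h : s ⊆ insert a (t.erase b)) (hb : b ∈ t) : s.card ≤ t.card := by
  have := Finset.card_insert_le a (t.erase b)
  rw [Finset.card_erase_of_mem hb] at this
  have := Finset.card_pos.2 ⟨b, hb⟩
  have := Finset.card_le_card h
  omega

namespace PNet

variable {N M N' : PNet} {a b c d p q t u u' v w x y : ℕ}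

theorem ext_of_adj_iff (hv : M.verts = N.verts) (ha : ∀ u v, M.adj u v ↔ N.adj u v) : M = N := by
  obtain ⟨V, A, hA, hAm⟩ := M
  obtain ⟨V', A', hA', hAm'⟩ := N
  obtain rfl : V = V' := hv
  obtain rfl : A = A' := funext₂ fun u v => propext (ha u v)
  obtain rfl : hA = hA' := Subsingleton.elim _ _
  rfl

def parents (N : PNet) (v : ℕ) : Finset ℕ := N.verts.filter (N.adj · v)

def children (N : PNet) (u : ℕ) : Finset ℕ := N.verts.filter (N.adj u ·)

@[simp] theorem mem_parents : u ∈ N.parents v ↔ N.adj u v :=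
  Finset.mem_filter.trans (and_iff_right_of_imp fun h => (N.adj_mem u v h).1)

@[simp] theorem mem_children : v ∈ N.children u ↔ N.adj u v :=
  Finset.mem_filter.trans (and_iff_right_of_imp fun h => (N.adj_mem u v h).2)

theorem indeg_eq_card_parents : N.indeg v = (N.parents v).card := rfl

theorem outdeg_eq_card_children : N.outdeg u = (N.children u).card := rfl

theorem indeg_pos_iff : 0 < N.indeg v ↔ ∃ u, N.adj u v := by
  simp [indeg_eq_card_parents, Finset.card_pos, Finset.Nonempty]

theorem outdeg_pos_iff : 0 < N.outdeg u ↔ ∃ v, N.adj u v := by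
  simp [outdeg_eq_card_children, Finset.card_pos, Finset.Nonempty]

theorem outdeg_eq_zero_iff : N.outdeg u = 0 ↔ ∀ v, ¬ N.adj u v := by
  simpa using (outdeg_pos_iff (N := N) (u := u)).not

theorem indeg_le_indeg (h : ∀ u, M.adj u v → N.adj u v) : M.indeg v ≤ N.indeg v :=
  Finset.card_le_card fun u hu => mem_parents.2 (h u (mem_parents.1 hu))

theorem outdeg_le_outdeg (h : ∀ v, M.adj u v → N.adj u v) : M.outdeg u ≤ N.outdeg u :=
  Finset.card_le_card fun v hv => mem_children.2 (h v (mem_children.1 hv))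

theorem eq_of_adj_of_indeg_le_one (h : N.indeg v ≤ 1) (hu : N.adj u v) (hu' : N.adj u' v) :
    u = u' :=
  Finset.card_le_one.1 h u (mem_parents.2 hu) u' (mem_parents.2 hu')

theorem two_le_outdeg (ha : N.adj u a) (hb : N.adj u b) (hab : a ≠ b) : 2 ≤ N.outdeg u :=
  Finset.one_lt_card.2 ⟨a, mem_children.2 ha, b, mem_children.2 hb, hab⟩

theorem Acyclic.ne_of_adj (hN : N.Acyclic) (h : N.adj u v) : u ≠ v := by
  rintro rfl
  exact hN u (.single h)

theorem Acyclic.of_le_transGen (hN : N.Acyclic)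
    (h : ∀ u v, M.adj u v → Relation.TransGen N.adj u v) : M.Acyclic :=
  fun v hv => hN v (Relation.TransGen.closed h v v hv)

structure IsSubbinary (N : PNet) : Prop where
  acyclic : N.Acyclic
  indeg_le_two : ∀ v, N.indeg v ≤ 2
  outdeg_le_two : ∀ u, N.outdeg u ≤ 2
  outdeg_eq_one_of_indeg_eq_two : ∀ v, N.indeg v = 2 → N.outdeg v = 1

namespace IsSubbinary

variable (hN : N.IsSubbinary)
include hN

theorem indeg_le_one_of_two_le_outdeg (h : 2 ≤ N.outdeg v) : N.indeg v ≤ 1 := by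
  have := hN.indeg_le_two v
  have := mt (hN.outdeg_eq_one_of_indeg_eq_two v)
  omega

theorem eq_of_adj_of_outdeg_eq_zero (hv : N.outdeg v = 0) (hu : N.adj u v) (hu' : N.adj u' v) :
    u = u' := by
  refine eq_of_adj_of_indeg_le_one ?_ hu hu'
  have := hN.indeg_le_two v
  have := mt (hN.outdeg_eq_one_of_indeg_eq_two v)
  omega

theorem child_eq_or_eq (ha : N.adj u a) (hb : N.adj u b) (hab : a ≠ b) (hc : N.adj u c) :
    c = a ∨ c = b :=
  Finset.eq_or_eq_of_card_le_two (hN.outdeg_le_two u) (mem_children.2 ha) (mem_children.2 hb)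
    hab (mem_children.2 hc)

theorem parent_eq_or_eq (ha : N.adj a v) (hb : N.adj b v) (hab : a ≠ b) (hc : N.adj c v) :
    c = a ∨ c = b :=
  Finset.eq_or_eq_of_card_le_two (hN.indeg_le_two v) (mem_parents.2 ha) (mem_parents.2 hb)
    hab (mem_parents.2 hc)

theorem eq_of_adj_of_two_parents (ha : N.adj a v) (hb : N.adj b v) (hab : a ≠ b)
    (hc : N.adj v c) (hd : N.adj v d) : c = d := by
  have h2 : N.indeg v = 2 := le_antisymm (hN.indeg_le_two v)
    (Finset.one_lt_card.2 ⟨a, mem_parents.2 ha, b, mem_parents.2 hb, hab⟩)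
  exact Finset.card_le_one.1 (hN.outdeg_eq_one_of_indeg_eq_two v h2).le c (mem_children.2 hc)
    d (mem_children.2 hd)

omit hN in
theorem of_isBinary (h : N.IsBinary) : N.IsSubbinary := by
  obtain ⟨hac, ρ, ⟨-, hρ0⟩, hρ2, -, hclass⟩ := h
  refine ⟨hac, fun v => ?_, fun v => ?_, fun v => ?_⟩ <;>
  · by_cases hv : v ∈ N.verts
    · by_cases hvρ : v = ρ
      · subst hvρ; omega
      · rcases hclass v hv hvρ with h | h | h <;> omega
    · have hi : N.indeg v = 0 := Finset.card_eq_zero.2 <| Finset.filter_eq_empty_iff.2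
        fun u _ huv => hv (N.adj_mem u v huv).2
      have ho : N.outdeg v = 0 := Finset.card_eq_zero.2 <| Finset.filter_eq_empty_iff.2
        fun w _ hvw => hv (N.adj_mem v w hvw).1
      omega

theorem of_degree_le (hM : M.Acyclic) (hin : ∀ v, M.indeg v ≤ N.indeg v)
    (hout : ∀ u, M.outdeg u ≤ N.outdeg u)
    (hchild : ∀ t u v, M.adj t u → N.adj u v → ∃ w, M.adj u w) : M.IsSubbinary where
  acyclic := hM
  indeg_le_two v := (hin v).trans (hN.indeg_le_two v)
  outdeg_le_two u := (hout u).trans (hN.outdeg_le_two u)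
  outdeg_eq_one_of_indeg_eq_two v h := by
    have hN1 := hN.outdeg_eq_one_of_indeg_eq_two v
      (le_antisymm (hN.indeg_le_two v) (h ▸ hin v))
    obtain ⟨t, ht⟩ := indeg_pos_iff.1 (by omega : 0 < M.indeg v)
    obtain ⟨d, hd⟩ := outdeg_pos_iff.1 (by omega : 0 < N.outdeg v)
    have := outdeg_pos_iff.2 (hchild t v d ht hd)
    have := hout v
    omega

theorem of_adj_le (hle : ∀ u v, M.adj u v → N.adj u v)
    (hchild : ∀ t u v, M.adj t u → N.adj u v → ∃ w, M.adj u w) : M.IsSubbinary :=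
  hN.of_degree_le (hN.acyclic.of_le_transGen fun u v h => .single (hle u v h))
    (fun _ => indeg_le_indeg (hle · _)) (fun _ => outdeg_le_outdeg (hle _ ·)) hchild

end IsSubbinary

def eraseVertex (N : PNet) (y : ℕ) : PNet where
  verts := N.verts.erase y
  adj u v := N.adj u v ∧ u ≠ y ∧ v ≠ y
  adjDec _ _ := inferInstance
  adj_mem _ _ h := ⟨Finset.mem_erase.2 ⟨h.2.1, (N.adj_mem _ _ h.1).1⟩,
    Finset.mem_erase.2 ⟨h.2.2, (N.adj_mem _ _ h.1).2⟩⟩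

def eraseEdge (N : PNet) (a b : ℕ) : PNet where
  verts := N.verts
  adj u v := N.adj u v ∧ ¬ (u = a ∧ v = b)
  adjDec _ _ := inferInstance
  adj_mem _ _ h := N.adj_mem _ _ h.1

def suppress (N : PNet) (p : ℕ) : PNet where
  verts := N.verts.erase p
  adj u v := u ≠ p ∧ v ≠ p ∧ (N.adj u v ∨ N.adj u p ∧ N.adj p v)
  adjDec _ _ := inferInstance
  adj_mem u v h := by
    have hu : u ∈ N.verts :=
      h.2.2.elim (fun h => (N.adj_mem _ _ h).1) fun h => (N.adj_mem _ _ h.1).1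
    have hv : v ∈ N.verts :=
      h.2.2.elim (fun h => (N.adj_mem _ _ h).2) fun h => (N.adj_mem _ _ h.2).2
    exact ⟨Finset.mem_erase.2 ⟨h.1, hu⟩, Finset.mem_erase.2 ⟨h.2.1, hv⟩⟩

@[simp] theorem eraseVertex_verts : (N.eraseVertex y).verts = N.verts.erase y := rfl
@[simp] theorem eraseVertex_adj : (N.eraseVertex y).adj u v ↔ N.adj u v ∧ u ≠ y ∧ v ≠ y := .rfl
@[simp] theorem eraseEdge_verts : (N.eraseEdge a b).verts = N.verts := rfl
@[simp] theorem eraseEdge_adj : (N.eraseEdge a b).adj u v ↔ N.adj u v ∧ ¬ (u = a ∧ v = b) := .rfl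
@[simp] theorem suppress_verts : (N.suppress p).verts = N.verts.erase p := rfl
@[simp] theorem suppress_adj :
    (N.suppress p).adj u v ↔ u ≠ p ∧ v ≠ p ∧ (N.adj u v ∨ N.adj u p ∧ N.adj p v) := .rfl

structure IsSuppressible (N : PNet) (q p c : ℕ) : Prop where
  adj_parent : N.adj q p
  adj_child : N.adj p c
  eq_of_adj_parent : ∀ u, N.adj u p → u = q
  eq_of_adj_child : ∀ v, N.adj p v → v = c

theorem IsSuppressible.suppress_adj_iff (hs : N.IsSuppressible q p c) (hN : N.Acyclic) :
    (N.suppress p).adj u v ↔ (N.adj u v ∧ u ≠ p ∧ v ≠ p) ∨ (u = q ∧ v = c) := by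
  have hqp := hN.ne_of_adj hs.adj_parent
  have hpc := hN.ne_of_adj hs.adj_child
  have := hs.eq_of_adj_parent u
  have := hs.eq_of_adj_child v
  have := hs.adj_parent
  have := hs.adj_child
  simp only [suppress_adj]
  grind

theorem IsSubbinary.eraseVertex (hN : N.IsSubbinary) (hpx : N.adj p x) (hxy : x ≠ y)
    (hy : ∀ u, N.adj u y → u = p) : (N.eraseVertex y).IsSubbinary := by
  refine hN.of_adj_le (fun u v h => h.1) fun t u v ht huv => ?_
  by_cases hvy : v = y
  · obtain rfl := hy u (hvy ▸ huv)
    exact ⟨x, hpx, ht.2.2, hxy⟩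
  · exact ⟨v, huv, ht.2.2, hvy⟩

theorem IsSubbinary.eraseEdge (hN : N.IsSubbinary) (hac : N.adj a c) (hcb : c ≠ b) :
    (N.eraseEdge a b).IsSubbinary := by
  refine hN.of_adj_le (fun u v h => h.1) fun t u v _ huv => ?_
  by_cases hu : u = a
  · exact ⟨c, hu ▸ hac, fun h => hcb h.2⟩
  · exact ⟨v, huv, fun h => hu h.1⟩

theorem IsSubbinary.suppress (hN : N.IsSubbinary) (hs : N.IsSuppressible q p c) :
    (N.suppress p).IsSubbinary := by
  have hcp : c ≠ p := (hN.acyclic.ne_of_adj hs.adj_child).symm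
  refine hN.of_degree_le (hN.acyclic.of_le_transGen fun u v h => ?_) (fun v => ?_) (fun u => ?_)
    fun t u v ht huv => ?_
  · rcases h.2.2 with h | ⟨h₁, h₂⟩
    exacts [.single h, .tail (.single h₁) h₂]
  · by_cases hv : v = c
    · subst hv
      rw [indeg_eq_card_parents, indeg_eq_card_parents]
      refine Finset.card_le_of_subset_insert_erase (a := q) ?_ (mem_parents.2 hs.adj_child)
      intro u hu
      rw [mem_parents, suppress_adj] at hu
      simp only [Finset.mem_insert, Finset.mem_erase, mem_parents]
      rcases hu.2.2 with h | ⟨h, -⟩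
      exacts [Or.inr ⟨hu.1, h⟩, Or.inl (hs.eq_of_adj_parent u h)]
    · exact indeg_le_indeg fun u h =>
        h.2.2.resolve_right fun h' => hv (hs.eq_of_adj_child v h'.2)
  · by_cases hu : u = q
    · subst hu
      rw [outdeg_eq_card_children, outdeg_eq_card_children]
      refine Finset.card_le_of_subset_insert_erase (a := c) ?_ (mem_children.2 hs.adj_parent)
      intro v hv
      rw [mem_children, suppress_adj] at hv
      simp only [Finset.mem_insert, Finset.mem_erase, mem_children]
      rcases hv.2.2 with h | ⟨-, h⟩
      exacts [Or.inr ⟨hv.2.1, h⟩, Or.inl (hs.eq_of_adj_child v h)]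
    · exact outdeg_le_outdeg fun v h =>
        h.2.2.resolve_right fun h' => hu (hs.eq_of_adj_parent u h'.1)
  · have hup : u ≠ p := ht.2.1
    by_cases hvp : v = p
    · subst hvp
      exact ⟨c, hup, hcp, .inr ⟨huv, hs.adj_child⟩⟩
    · exact ⟨v, hup, hvp, .inl huv⟩

/-- `TreeBased` without the conditions that follow from `S ≤ N.adj`, as every edge lies inside
`N.verts`. -/
structure IsBaseTree (N : PNet) (S : ℕ → ℕ → Prop) : Prop where
  adj_of_rel : ∀ ⦃u v⦄, S u v → N.adj u v
  existsUnique_rel_of_adj : ∀ ⦃u v⦄, N.adj u v → ∃! t, S t v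
  exists_rel_of_adj : ∀ ⦃u v⦄, N.adj u v → ∃ w, S u w

def HasBaseTree (N : PNet) : Prop := ∃ S, N.IsBaseTree S

theorem HasBaseTree.treeBased (h : N.HasBaseTree) : N.TreeBased := by
  obtain ⟨S, hS⟩ := h
  refine ⟨S, hS.adj_of_rel, fun v _ hv => ?_, fun v _ hv u hu => ?_, fun u _ hu => ?_⟩
  · obtain ⟨u, hu⟩ := indeg_pos_iff.1 hv
    exact hS.existsUnique_rel_of_adj hu
  · exact (indeg_pos_iff.2 ⟨u, hS.adj_of_rel hu⟩).ne' hv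
  · refine outdeg_eq_zero_iff.2 fun v huv => ?_
    obtain ⟨w, hw⟩ := hS.exists_rel_of_adj huv
    exact hu w hw

theorem IsTrivialNet.hasBaseTree (h : N.IsTrivialNet) : N.HasBaseTree := by
  obtain ⟨r, l, -, -, hadj⟩ := h
  refine ⟨N.adj, fun _ _ h => h, fun u v huv => ⟨u, huv, fun t htv => ?_⟩,
    fun _ v huv => ⟨v, huv⟩⟩
  rw [((hadj t v).1 htv).1, ((hadj u v).1 huv).1]

theorem HasBaseTree.of_eraseVertex (hy : ∀ w, ¬ N.adj y w) (hpy : N.adj p y)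
    (hyp : ∀ u, N.adj u y → u = p) (h : (N.eraseVertex y).HasBaseTree) : N.HasBaseTree := by
  obtain ⟨S, hS⟩ := h
  have hne : ∀ u v, N.adj u v → u ≠ y := fun u v huv hu => hy v (hu ▸ huv)
  refine ⟨fun u v => S u v ∨ u = p ∧ v = y, ⟨?_, fun u v huv => ?_, fun u v huv => ?_⟩⟩
  · rintro u v (h | ⟨rfl, rfl⟩)
    exacts [(hS.adj_of_rel h).1, hpy]
  · by_cases hv : v = y
    · refine ⟨p, .inr ⟨rfl, hv⟩, ?_⟩
      rintro t (h | ⟨rfl, -⟩)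
      exacts [absurd hv (hS.adj_of_rel h).2.2, rfl]
    · obtain ⟨t, ht, huniq⟩ := hS.existsUnique_rel_of_adj ⟨huv, hne u v huv, hv⟩
      refine ⟨t, .inl ht, ?_⟩
      rintro t' (h | ⟨-, rfl⟩)
      exacts [huniq t' h, absurd rfl hv]
  · by_cases hu : u = p
    · exact ⟨y, .inr ⟨hu, rfl⟩⟩
    · have hv : v ≠ y := fun hv => hu (hyp u (hv ▸ huv))
      obtain ⟨w, hw⟩ := hS.exists_rel_of_adj ⟨huv, hne u v huv, hv⟩
      exact ⟨w, .inl hw⟩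

theorem HasBaseTree.of_eraseEdge (hac : N.adj a c) (hcb : c ≠ b) (hdb : N.adj d b) (hda : d ≠ a)
    (h : (N.eraseEdge a b).HasBaseTree) : N.HasBaseTree := by
  obtain ⟨S, hS⟩ := h
  refine ⟨S, ⟨fun u v h => (hS.adj_of_rel h).1, fun u v huv => ?_, fun u v huv => ?_⟩⟩
  · by_cases he : u = a ∧ v = b
    · obtain ⟨-, rfl⟩ := he
      exact hS.existsUnique_rel_of_adj ⟨hdb, fun h => hda h.1⟩
    · exact hS.existsUnique_rel_of_adj ⟨huv, he⟩
  · by_cases he : u = a ∧ v = b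
    · obtain ⟨rfl, -⟩ := he
      exact hS.exists_rel_of_adj ⟨hac, fun h => hcb h.2⟩
    · exact hS.exists_rel_of_adj ⟨huv, he⟩

theorem HasBaseTree.of_suppress (hN : N.Acyclic) (hs : N.IsSuppressible q p c)
    (hc : ∀ u, N.adj u c → u = p) (h : (N.suppress p).HasBaseTree) : N.HasBaseTree := by
  obtain ⟨S, hS⟩ := h
  have hqp : q ≠ p := hN.ne_of_adj hs.adj_parent
  have hcp : c ≠ p := (hN.ne_of_adj hs.adj_child).symm
  have hadj : ∀ u v, (N.suppress p).adj u v ↔ (N.adj u v ∧ u ≠ p ∧ v ≠ p) ∨ (u = q ∧ v = c) :=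
    fun u v => hs.suppress_adj_iff hN
  have hSc : ∀ u, S u c → u = q := fun u h => by
    rcases (hadj u c).1 (hS.adj_of_rel h) with ⟨h, hup, -⟩ | ⟨rfl, -⟩
    exacts [absurd (hc u h) hup, rfl]
  refine ⟨fun u v => (S u v ∧ v ≠ c) ∨ (u = q ∧ v = p) ∨ (u = p ∧ v = c), ⟨?_, ?_, ?_⟩⟩
  · rintro u v (⟨h, hvc⟩ | ⟨rfl, rfl⟩ | ⟨rfl, rfl⟩)
    · rcases (hadj u v).1 (hS.adj_of_rel h) with ⟨h, -⟩ | ⟨-, rfl⟩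
      exacts [h, absurd rfl hvc]
    exacts [hs.adj_parent, hs.adj_child]
  · intro u v huv
    by_cases hvp : v = p
    · refine ⟨q, .inr (.inl ⟨rfl, hvp⟩), ?_⟩
      rintro t (⟨h, -⟩ | ⟨rfl, -⟩ | ⟨-, rfl⟩)
      exacts [absurd hvp (hS.adj_of_rel h).2.1, rfl, absurd hvp hcp]
    by_cases hvc : v = c
    · refine ⟨p, .inr (.inr ⟨rfl, hvc⟩), ?_⟩
      rintro t (⟨-, h⟩ | ⟨-, rfl⟩ | ⟨rfl, -⟩)
      exacts [absurd hvc h, absurd hvc hcp.symm, rfl]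
    have hup : u ≠ p := fun hup => hvc (hs.eq_of_adj_child v (hup ▸ huv))
    obtain ⟨t, ht, huniq⟩ := hS.existsUnique_rel_of_adj ((hadj u v).2 (.inl ⟨huv, hup, hvp⟩))
    refine ⟨t, .inl ⟨ht, hvc⟩, ?_⟩
    rintro t' (⟨h, -⟩ | ⟨-, rfl⟩ | ⟨-, rfl⟩)
    exacts [huniq t' h, absurd rfl hvp, absurd rfl hvc]
  · intro u v huv
    by_cases huq : u = q
    · exact ⟨p, .inr (.inl ⟨huq, rfl⟩)⟩
    by_cases hup : u = p
    · exact ⟨c, .inr (.inr ⟨hup, rfl⟩)⟩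
    have hvp : v ≠ p := fun hvp => huq (hs.eq_of_adj_parent u (hvp ▸ huv))
    obtain ⟨w, hw⟩ := hS.exists_rel_of_adj ((hadj u v).2 (.inl ⟨huv, hup, hvp⟩))
    exact ⟨w, .inl ⟨hw, fun hwc => huq (hSc u (hwc ▸ hw))⟩⟩

theorem IsSubbinary.cherryPick (hN : N.IsSubbinary) (h : N.CherryPick N') :
    N'.IsSubbinary ∧ (N'.HasBaseTree → N.HasBaseTree) := by
  obtain ⟨x, y, p, hxy, ⟨-, hx⟩, ⟨-, hy⟩, hpx, hpy, hcase⟩ := h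
  have hyp : ∀ u, N.adj u y → u = p := fun u hu => hN.eq_of_adj_of_outdeg_eq_zero hy hu hpy
  have hpy' : p ≠ y := hN.acyclic.ne_of_adj hpy
  have hy' := outdeg_eq_zero_iff.1 hy
  have hne : ∀ u v, N.adj u v → u ≠ y := fun u v huv hu => hy' v (hu ▸ huv)
  have h₁ := hN.eraseVertex hpx hxy hyp
  have hlift₁ := HasBaseTree.of_eraseVertex hy' hpy hyp
  rcases hcase with ⟨-, hverts, hadj⟩ | ⟨q, hqp, hverts, hadj⟩
  · obtain rfl : N' = N.eraseVertex y :=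
      ext_of_adj_iff (by simp [hverts, Finset.sdiff_singleton_eq_erase])
        fun u v => by grind [eraseVertex_adj]
    exact ⟨h₁, hlift₁⟩
  have hs : (N.eraseVertex y).IsSuppressible q p x :=
    ⟨⟨hqp, hne q p hqp, hpy'⟩, ⟨hpx, hpy', hxy⟩,
      fun u h => eq_of_adj_of_indeg_le_one
        (hN.indeg_le_one_of_two_le_outdeg (two_le_outdeg hpx hpy hxy)) h.1 hqp,
      fun v h => (hN.child_eq_or_eq hpx hpy hxy h.1).resolve_right h.2.2⟩
  obtain rfl : N' = (N.eraseVertex y).suppress p := by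
    refine ext_of_adj_iff ?_ fun u v => ?_
    · ext v; simp [hverts]; tauto
    · rw [hadj, hs.suppress_adj_iff h₁.acyclic, eraseVertex_adj]
      grind
  exact ⟨h₁.suppress hs, hlift₁ ∘ HasBaseTree.of_suppress h₁.acyclic hs
    fun u hu => hN.eq_of_adj_of_outdeg_eq_zero hx hu.1 hpx⟩

theorem IsSubbinary.isSuppressible_eraseEdge (hN : N.IsSubbinary) (hpw : N.adj p w)
    (hqw : N.adj q w) (hqp : q ≠ p) (hwx : N.adj w x) : (N.eraseEdge p w).IsSuppressible q w x :=
  ⟨⟨hqw, fun h => hqp h.1⟩, ⟨hwx, fun h => hN.acyclic.ne_of_adj hwx h.2.symm⟩,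
    fun _ h => (hN.parent_eq_or_eq hpw hqw hqp.symm h.1).resolve_left fun hu => h.2 ⟨hu, rfl⟩,
    fun _ h => hN.eq_of_adj_of_two_parents hpw hqw hqp.symm h.1 hwx⟩

theorem IsSubbinary.retCherryPick (hN : N.IsSubbinary) (h : N.RetCherryPick N') :
    N'.IsSubbinary ∧ (N'.HasBaseTree → N.HasBaseTree) := by
  obtain ⟨x, y, w, p, hxy, ⟨-, hx⟩, ⟨-, hy⟩, hwx, -, hpw, hpy, hp, q', hq'p, hq'w, hcase⟩ := h
  have hwy : w ≠ y := fun h => outdeg_eq_zero_iff.1 hy x (h ▸ hwx)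
  have hpx : p ≠ x := fun h => outdeg_eq_zero_iff.1 hx w (h ▸ hpw)
  have hpw' : p ≠ w := hN.acyclic.ne_of_adj hpw
  have hs₁ := hN.isSuppressible_eraseEdge hpw hq'w hq'p hwx
  have h₁ := hN.eraseEdge hpy hwy.symm
  have h₂ := h₁.suppress hs₁
  have hlift₂ : ((N.eraseEdge p w).suppress w).HasBaseTree → N.HasBaseTree :=
    HasBaseTree.of_eraseEdge hpy hwy.symm hq'w hq'p ∘ HasBaseTree.of_suppress h₁.acyclic hs₁
      fun u hu => hN.eq_of_adj_of_outdeg_eq_zero hx hu.1 hwx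
  have hadj₂ := fun u v => hs₁.suppress_adj_iff (u := u) (v := v) h₁.acyclic
  simp only [eraseEdge_adj] at hadj₂
  rcases hcase with ⟨-, hverts, hadj⟩ | ⟨q, hqp, hverts, hadj⟩
  · obtain rfl : N' = (N.eraseEdge p w).suppress w :=
      ext_of_adj_iff (by simp [hverts, Finset.sdiff_singleton_eq_erase]) fun u v => by grind
    exact ⟨h₂, hlift₂⟩
  have hqw : q ≠ w := fun h => hpx (hs₁.eq_of_adj_child p ⟨h ▸ hqp, fun h => hpw' h.2⟩)
  have hs₂ : ((N.eraseEdge p w).suppress w).IsSuppressible q p y := by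
    refine ⟨(hadj₂ q p).2 (.inl ⟨⟨hqp, fun h => hpw' h.2⟩, hqw, hpw'⟩),
      (hadj₂ p y).2 (.inl ⟨⟨hpy, fun h => hwy h.2.symm⟩, hpw', hwy.symm⟩), fun u h => ?_,
      fun v h => ?_⟩
    · rcases (hadj₂ u p).1 h with ⟨⟨h, -⟩, -⟩ | ⟨-, rfl⟩
      exacts [eq_of_adj_of_indeg_le_one hp h hqp, absurd rfl hpx]
    · rcases (hadj₂ p v).1 h with ⟨⟨h, -⟩, -, hvw⟩ | ⟨rfl, -⟩
      exacts [(hN.child_eq_or_eq hpw hpy hwy h).resolve_left hvw, absurd rfl hq'p]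
  obtain rfl : N' = ((N.eraseEdge p w).suppress w).suppress p := by
    refine ext_of_adj_iff ?_ fun u v => ?_
    · ext v; simp [hverts]; tauto
    · rw [hadj, hs₂.suppress_adj_iff h₂.acyclic, hadj₂]
      grind
  refine ⟨h₂.suppress hs₂, hlift₂ ∘ HasBaseTree.of_suppress h₂.acyclic hs₂ fun u hu => ?_⟩
  rcases (hadj₂ u y).1 hu with ⟨⟨h, -⟩, -⟩ | ⟨-, rfl⟩
  exacts [hN.eq_of_adj_of_outdeg_eq_zero hy h hpy, absurd rfl hxy]

theorem IsSubbinary.reduce (hN : N.IsSubbinary) (h : N.Reduce N') :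
    N'.IsSubbinary ∧ (N'.HasBaseTree → N.HasBaseTree) :=
  h.elim hN.cherryPick hN.retCherryPick

theorem IsSubbinary.hasBaseTree_of_reflTransGen_reduce {T : PNet} (hN : N.IsSubbinary)
    (h : Relation.ReflTransGen Reduce N T) (hT : T.HasBaseTree) : N.HasBaseTree := by
  induction h using Relation.ReflTransGen.head_induction_on with
  | refl => exact hT
  | head hstep _ ih =>
    obtain ⟨h', hlift⟩ := hN.reduce hstep
    exact hlift (ih h')

end PNet

open PNet in
/-- Every binary orchard phylogenetic network is tree-based. -/
theorem stmt6 (N : PNet) (hbin : N.IsBinary) (horch : N.Orchard) :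
    N.TreeBased := by
  obtain ⟨T, hT, hred⟩ := horch
  exact ((IsSubbinary.of_isBinary hbin).hasBaseTree_of_reflTransGen_reduce hred
    hT.hasBaseTree).treeBased
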